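/- Suppose a symmetric complexity term C(X,Y) satisfies both C(X,Y) ≤ C(X,Z) + C(Y,Z) − H(Z) and C(X,Z) ≥ max(H(X), H(Z)) for all X, Y, Z (with C(X,Y) ≥ I(X;Y) ≥ 0). Then the normalized divergence NIB(X,Y) = 1 − I(X;Y)/C(X,Y) satisfies the triangle inequality NIB(X,Y) ≤ NIB(X,Z) + NIB(Y,Z). -/

import Mathlib

open Real

/-- Shannon entropy of a discrete random variable `X` on a finite probability
space with weights `p`. -/
noncomputable def ent {Ω S : Type*} [Fintype Ω] [Fintype S] [DecidableEq S]
    (p : Ω → ℝ) (X : Ω → S) : ℝ :=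
  ∑ s : S, Real.negMulLog (∑ ω ∈ Finset.univ.filter (fun ω => X ω = s), p ω)

/-- Conditional entropy `H(X|Y) = H(X,Y) - H(Y)`. -/
noncomputable def condEnt {Ω S T : Type*} [Fintype Ω] [Fintype S] [Fintype T]
    [DecidableEq S] [DecidableEq T] (p : Ω → ℝ) (X : Ω → S) (Y : Ω → T) : ℝ :=
  ent p (fun ω => (X ω, Y ω)) - ent p Y

/-- Mutual information `I(X;Y) = H(X) + H(Y) - H(X,Y)`. -/
noncomputable def mutualInfo {Ω S T : Type*} [Fintype Ω] [Fintype S] [Fintype T]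
    [DecidableEq S] [DecidableEq T] (p : Ω → ℝ) (X : Ω → S) (Y : Ω → T) : ℝ :=
  ent p X + ent p Y - ent p (fun ω => (X ω, Y ω))

/-!
Submodularity of entropy, `H(X,Y,Z) + H(Z) ≤ H(X,Z) + H(Y,Z)`, is subadditivity
`H(X,Y) ≤ H(X) + H(Y)` applied to each slice `{Z = u}`, and subadditivity is Gibbs' inequality
against the product of the marginals. Together with `H(X,Y) ≤ H(X,Y,Z)` it gives
`I(X;Y) ≥ I(X;Z) + I(Y;Z) - H(Z)`. The triangle inequality then follows by comparing all three
normalized distances through the common denominator `M = C(X,Z) + C(Y,Z) - H(Z)`, which is at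
least `C(X,Y)` by the triangle inequality for `C`, and at least `C(X,Z)` and `C(Y,Z)` because
`C ≥ H(Z)`.
-/

open Finset

theorem sum_mul_log_le_sum_mul_log {ι : Type*} [Fintype ι] {p q : ι → ℝ}
    (hp : ∀ i, 0 ≤ p i) (hq : ∀ i, 0 ≤ q i) (hpq : ∀ i, 0 < p i → 0 < q i)
    (hsum : ∑ i, q i ≤ ∑ i, p i) :
    ∑ i, p i * log (q i) ≤ ∑ i, p i * log (p i) := by
  have hterm : ∀ i, p i * log (q i) - p i * log (p i) ≤ q i - p i := by
    intro i
    rcases (hp i).eq_or_lt with hzero | hpos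
    · simp [← hzero, hq i]
    · have hqpos := hpq i hpos
      calc p i * log (q i) - p i * log (p i) = p i * log (q i / p i) := by
            rw [log_div hqpos.ne' hpos.ne']; ring
        _ ≤ p i * (q i / p i - 1) := by gcongr; exact log_le_sub_one_of_pos (by positivity)
        _ = q i - p i := by field_simp
  have := sum_le_sum fun i (_ : i ∈ univ) => hterm i
  rw [sum_sub_distrib, sum_sub_distrib] at this
  linarith

theorem negMulLog_sum_le {ι : Type*} (s : Finset ι) {f : ι → ℝ}
    (hf : ∀ i ∈ s, 0 ≤ f i) :
    negMulLog (∑ i ∈ s, f i) ≤ ∑ i ∈ s, negMulLog (f i) := by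
  rw [negMulLog, neg_mul, sum_mul, ← sum_neg_distrib]
  refine sum_le_sum fun i hi => ?_
  rcases (hf i hi).eq_or_lt with hzero | hpos
  · simp [← hzero]
  · have := log_le_log hpos (single_le_sum hf hi)
    rw [negMulLog]
    nlinarith

theorem sum_negMulLog_add_negMulLog_sum_le {S T : Type*} [Fintype S] [Fintype T]
    (r : S → T → ℝ) (hr : ∀ s t, 0 ≤ r s t) :
    ∑ s, ∑ t, negMulLog (r s t) + negMulLog (∑ s, ∑ t, r s t) ≤
      ∑ s, negMulLog (∑ t, r s t) + ∑ t, negMulLog (∑ s, r s t) := by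
  set a : S → ℝ := fun s => ∑ t, r s t
  set b : T → ℝ := fun t => ∑ s, r s t
  set c : ℝ := ∑ s, a s
  have ha : ∀ s, 0 ≤ a s := fun s => sum_nonneg fun t _ => hr s t
  have hb : ∀ t, 0 ≤ b t := fun t => sum_nonneg fun s _ => hr s t
  have hra : ∀ s t, r s t ≤ a s := fun s t => single_le_sum (fun t _ => hr s t) (mem_univ t)
  have hrb : ∀ s t, r s t ≤ b t := fun s t => single_le_sum (fun s _ => hr s t) (mem_univ s)
  have hac : ∀ s, a s ≤ c := fun s => single_le_sum (fun s _ => ha s) (mem_univ s)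
  have hbc : ∑ t, b t = c := sum_comm
  have hsum : ∑ x : S × T, a x.1 * b x.2 / c = ∑ x : S × T, r x.1 x.2 := by
    rw [← sum_div, Fintype.sum_prod_type, Fintype.sum_prod_type, ← sum_mul_sum, hbc,
      mul_self_div_self]
  have hgibbs := sum_mul_log_le_sum_mul_log (p := fun x : S × T => r x.1 x.2)
    (q := fun x => a x.1 * b x.2 / c) (fun x => hr x.1 x.2)
    (fun x => div_nonneg (mul_nonneg (ha x.1) (hb x.2)) (sum_nonneg fun s _ => ha s))
    (fun x hx => div_pos (mul_pos (hx.trans_le (hra x.1 x.2)) (hx.trans_le (hrb x.1 x.2)))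
      ((hx.trans_le (hra x.1 x.2)).trans_le (hac x.1)))
    hsum.le
  have hsplit : ∀ s t, r s t * log (a s * b t / c) =
      r s t * log (a s) + r s t * log (b t) - r s t * log c := by
    intro s t
    rcases (hr s t).eq_or_lt with hzero | hpos
    · simp [← hzero]
    · have hapos := hpos.trans_le (hra s t)
      have hbpos := hpos.trans_le (hrb s t)
      rw [log_div (mul_pos hapos hbpos).ne' (hapos.trans_le (hac s)).ne',
        log_mul hapos.ne' hbpos.ne']
      ring
  simp only [Fintype.sum_prod_type, hsplit, sum_add_distrib, sum_sub_distrib] at hgibbs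
  have hA : ∑ s, ∑ t, r s t * log (a s) = ∑ s, a s * log (a s) := by
    simp only [← sum_mul, a]
  have hB : ∑ s, ∑ t, r s t * log (b t) = ∑ t, b t * log (b t) := by
    rw [sum_comm]; simp only [← sum_mul, b]
  have hC : ∑ s, ∑ t, r s t * log c = c * log c := by simp only [← sum_mul, c, a]
  simp only [negMulLog, neg_mul, sum_neg_distrib]
  linarith

section
variable {Ω S T U : Type*} [Fintype Ω] [DecidableEq S] [DecidableEq T] (p : Ω → ℝ)

noncomputable def law (X : Ω → S) (x : S) : ℝ :=
  ∑ ω ∈ univ.filter (fun ω => X ω = x), p ω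

theorem law_nonneg (hp : ∀ ω, 0 ≤ p ω) (X : Ω → S) (x : S) : 0 ≤ law p X x :=
  sum_nonneg fun ω _ => hp ω

theorem ent_eq_sum_law [Fintype S] (X : Ω → S) : ent p X = ∑ x, negMulLog (law p X x) := rfl

theorem sum_law_pair_left [Fintype S] (X : Ω → S) (Y : Ω → T) (y : T) :
    ∑ x, law p (fun ω => (X ω, Y ω)) (x, y) = law p Y y := by
  rw [law, ← sum_fiberwise _ X]
  simp only [law, filter_filter, Prod.mk.injEq, and_comm]

theorem sum_law_pair_right [Fintype T] (X : Ω → S) (Y : Ω → T) (x : S) :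
    ∑ y, law p (fun ω => (X ω, Y ω)) (x, y) = law p X x := by
  simp only [law, Prod.mk.injEq, ← filter_filter]
  exact sum_fiberwise _ _ _

theorem ent_le_ent_pair [Fintype S] [Fintype T] (hp : ∀ ω, 0 ≤ p ω)
    (X : Ω → S) (Y : Ω → T) :
    ent p Y ≤ ent p (fun ω => (X ω, Y ω)) := by
  rw [ent_eq_sum_law, ent_eq_sum_law, Fintype.sum_prod_type, sum_comm]
  refine sum_le_sum fun y _ => ?_
  rw [← sum_law_pair_left p X Y]
  exact negMulLog_sum_le _ fun x _ => law_nonneg p hp _ _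

theorem ent_pair_add_ent_le [Fintype S] [Fintype T] [Fintype U] [DecidableEq U]
    (hp : ∀ ω, 0 ≤ p ω) (X : Ω → S) (Y : Ω → T) (Z : Ω → U) :
    ent p (fun ω => (X ω, Y ω)) + ent p Z ≤
      ent p (fun ω => (X ω, Z ω)) + ent p (fun ω => (Y ω, Z ω)) := by
  -- `Z` comes first, so that `r u` is the joint law of `(X, Y)` on the slice `{Z = u}`.
  set r : U → S → T → ℝ := fun u x y => law p (fun ω => (Z ω, X ω, Y ω)) (u, x, y)
  have hZ : ent p Z = ∑ u, negMulLog (∑ x, ∑ y, r u x y) := by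
    simp only [ent_eq_sum_law, r, ← Fintype.sum_prod_type', sum_law_pair_right]
  have hXZ : ent p (fun ω => (X ω, Z ω)) = ∑ u, ∑ x, negMulLog (∑ y, r u x y) := by
    rw [ent_eq_sum_law, Fintype.sum_prod_type, sum_comm]
    refine sum_congr rfl fun u _ => sum_congr rfl fun x _ => ?_
    rw [law, ← sum_fiberwise _ Y]
    simp only [r, law, filter_filter, Prod.mk.injEq, and_comm, and_left_comm, and_assoc]
  have hYZ : ent p (fun ω => (Y ω, Z ω)) = ∑ u, ∑ y, negMulLog (∑ x, r u x y) := by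
    rw [ent_eq_sum_law, Fintype.sum_prod_type, sum_comm]
    refine sum_congr rfl fun u _ => sum_congr rfl fun y _ => ?_
    rw [law, ← sum_fiberwise _ X]
    simp only [r, law, filter_filter, Prod.mk.injEq, and_comm, and_assoc]
  have hXYZ : ent p (fun ω => (Z ω, X ω, Y ω)) = ∑ u, ∑ x, ∑ y, negMulLog (r u x y) := by
    simp only [ent_eq_sum_law, Fintype.sum_prod_type, r]
  have hmono := ent_le_ent_pair p hp Z (fun ω => (X ω, Y ω))
  have hsub := sum_le_sum fun u (_ : u ∈ univ) =>
    sum_negMulLog_add_negMulLog_sum_le (r u) fun x y => law_nonneg p hp _ _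
  simp only [sum_add_distrib] at hsub
  linarith

theorem mutualInfo_add_mutualInfo_sub_ent_le [Fintype S] [Fintype T] [Fintype U] [DecidableEq U]
    (hp : ∀ ω, 0 ≤ p ω) (X : Ω → S) (Y : Ω → T) (Z : Ω → U) :
    mutualInfo p X Z + mutualInfo p Y Z - ent p Z ≤ mutualInfo p X Y := by
  have := ent_pair_add_ent_le p hp X Y Z
  simp only [mutualInfo]
  linarith

end

theorem nibd_triangle_general {Ω S : Type*} [Fintype Ω] [Fintype S] [DecidableEq S]
    (p : Ω → ℝ) (hp0 : ∀ ω, 0 ≤ p ω)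
    (C : (Ω → S) → (Ω → S) → ℝ)
    (hsub : ∀ X Y Z : Ω → S, C X Y ≤ C X Z + C Y Z - ent p Z)
    (hmax : ∀ X Z : Ω → S, C X Z ≥ max (ent p X) (ent p Z))
    (hCI : ∀ X Y : Ω → S, mutualInfo p X Y ≤ C X Y)
    (hI0 : ∀ X Y : Ω → S, 0 ≤ mutualInfo p X Y)
    (hCpos : ∀ X Y : Ω → S, 0 < C X Y)
    (X Y Z : Ω → S) :
    1 - mutualInfo p X Y / C X Y ≤
      (1 - mutualInfo p X Z / C X Z) + (1 - mutualInfo p Y Z / C Y Z) := by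
  have hZX : ent p Z ≤ C X Z := (le_max_right _ _).trans (hmax X Z)
  have hZY : ent p Z ≤ C Y Z := (le_max_right _ _).trans (hmax Y Z)
  have hCXZ := hCpos X Z
  have hCYZ := hCpos Y Z
  have hI := mutualInfo_add_mutualInfo_sub_ent_le p hp0 X Y Z
  set M := C X Z + C Y Z - ent p Z with hM
  have hMpos : 0 < M := by linarith
  calc 1 - mutualInfo p X Y / C X Y
      ≤ 1 - mutualInfo p X Y / M :=
        sub_le_sub_left (div_le_div_of_nonneg_left (hI0 X Y) (hCpos X Y) (hsub X Y Z)) 1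
    _ ≤ 1 - (mutualInfo p X Z + mutualInfo p Y Z - ent p Z) / M := by gcongr
    _ = (C X Z - mutualInfo p X Z) / M + (C Y Z - mutualInfo p Y Z) / M := by
        field_simp
        linarith
    _ ≤ (C X Z - mutualInfo p X Z) / C X Z + (C Y Z - mutualInfo p Y Z) / C Y Z := by
        gcongr <;> linarith [hCI X Z, hCI Y Z]
    _ = (1 - mutualInfo p X Z / C X Z) + (1 - mutualInfo p Y Z / C Y Z) := by
        field_simp

theorem nibd_triangle {Ω S : Type*} [Fintype Ω] [Fintype S] [DecidableEq S]
    (p : Ω → ℝ) (hp0 : ∀ ω, 0 ≤ p ω) (hp1 : ∑ ω, p ω = 1)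
    (C : (Ω → S) → (Ω → S) → ℝ)
    (hsym : ∀ X Y : Ω → S, C X Y = C Y X)
    (hsub : ∀ X Y Z : Ω → S, C X Y ≤ C X Z + C Y Z - ent p Z)
    (hmax : ∀ X Z : Ω → S, C X Z ≥ max (ent p X) (ent p Z))
    (hCI : ∀ X Y : Ω → S, mutualInfo p X Y ≤ C X Y)
    (hI0 : ∀ X Y : Ω → S, 0 ≤ mutualInfo p X Y)
    (hCpos : ∀ X Y : Ω → S, 0 < C X Y)
    (X Y Z : Ω → S) :
    1 - mutualInfo p X Y / C X Y ≤
      (1 - mutualInfo p X Z / C X Z) + (1 - mutualInfo p Y Z / C Y Z) :=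
  nibd_triangle_general p hp0 C hsub hmax hCI hI0 hCpos X Y Z
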